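/- arXiv:quant-ph/0501142 — 3 statements merged into one kernel-verified Lean document; each statement's English description precedes it below -/
import Mathlib

section
/- Every minimal sensitive block of a total Boolean function f on an input X has size at most the block sensitivity bs(f). -/
def flipSet {N : ℕ} (x : Fin N → Bool) (B : Finset (Fin N)) : Fin N → Bool :=
  fun i => if i ∈ B then !(x i) else x i

def SensitiveBlock {N : ℕ} (f : (Fin N → Bool) → Bool) (x : Fin N → Bool)
    (B : Finset (Fin N)) : Prop :=
  f (flipSet x B) ≠ f x

noncomputable def bsAt {N : ℕ} (f : (Fin N → Bool) → Bool) (x : Fin N → Bool) : ℕ :=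
  sSup {k | ∃ Bs : Finset (Finset (Fin N)), Bs.card = k ∧
    (∀ B ∈ Bs, SensitiveBlock f x B) ∧
    (Bs : Set (Finset (Fin N))).Pairwise (fun B B' => Disjoint B B')}

noncomputable def blockSens {N : ℕ} (f : (Fin N → Bool) → Bool) : ℕ :=
  sSup (Set.range (bsAt f))

noncomputable def sensAt {N : ℕ} (f : (Fin N → Bool) → Bool) (x : Fin N → Bool) : ℕ :=
  {i : Fin N | SensitiveBlock f x {i}}.ncard

noncomputable def sens {N : ℕ} (f : (Fin N → Bool) → Bool) : ℕ :=
  sSup (Set.range (sensAt f))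

def MinimalSensitiveBlock {N : ℕ} (f : (Fin N → Bool) → Bool) (x : Fin N → Bool)
    (B : Finset (Fin N)) : Prop :=
  SensitiveBlock f x B ∧ ∀ B' ⊂ B, ¬ SensitiveBlock f x B'

section BlockSensitivity

variable {N : ℕ}

@[simp]
lemma flipSet_empty (x : Fin N → Bool) : flipSet x ∅ = x :=
  funext fun _ => if_neg (Finset.notMem_empty _)

lemma flipSet_flipSet_singleton {x : Fin N → Bool} {B : Finset (Fin N)} {i : Fin N}
    (hi : i ∈ B) : flipSet (flipSet x B) {i} = flipSet x (B.erase i) := by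
  funext j
  by_cases hj : j = i
  · subst hj
    simp [flipSet, hi]
  · simp [flipSet, hj]

lemma not_sensitiveBlock_empty (f : (Fin N → Bool) → Bool) (x : Fin N → Bool) :
    ¬ SensitiveBlock f x ∅ := by
  simp [SensitiveBlock]

lemma card_le_of_pairwise_disjoint_sensitiveBlock {f : (Fin N → Bool) → Bool}
    {x : Fin N → Bool} {Bs : Finset (Finset (Fin N))} (hsens : ∀ B ∈ Bs, SensitiveBlock f x B)
    (hdisj : (Bs : Set (Finset (Fin N))).Pairwise (fun B B' => Disjoint B B')) :
    Bs.card ≤ N := by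
  have hne : ∀ B ∈ Bs, B.Nonempty := fun B hB =>
    Finset.nonempty_iff_ne_empty.2 fun h => not_sensitiveBlock_empty f x (h ▸ hsens B hB)
  calc Bs.card ≤ (Bs.biUnion id).card := Finset.card_le_card_biUnion hdisj hne
    _ ≤ N := (Finset.card_le_univ _).trans_eq (Fintype.card_fin N)

lemma bddAbove_setOf_card_pairwise_disjoint_sensitiveBlock (f : (Fin N → Bool) → Bool)
    (x : Fin N → Bool) :
    BddAbove {k | ∃ Bs : Finset (Finset (Fin N)), Bs.card = k ∧
      (∀ B ∈ Bs, SensitiveBlock f x B) ∧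
      (Bs : Set (Finset (Fin N))).Pairwise (fun B B' => Disjoint B B')} :=
  ⟨N, by
    rintro _ ⟨Bs, rfl, hsens, hdisj⟩
    exact card_le_of_pairwise_disjoint_sensitiveBlock hsens hdisj⟩

lemma bsAt_le (f : (Fin N → Bool) → Bool) (x : Fin N → Bool) : bsAt f x ≤ N :=
  csSup_le ⟨0, ∅, by simp⟩ fun _ ⟨_, hk, hsens, hdisj⟩ =>
    hk ▸ card_le_of_pairwise_disjoint_sensitiveBlock hsens hdisj

lemma card_le_bsAt {f : (Fin N → Bool) → Bool} {x : Fin N → Bool}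
    {Bs : Finset (Finset (Fin N))} (hsens : ∀ B ∈ Bs, SensitiveBlock f x B)
    (hdisj : (Bs : Set (Finset (Fin N))).Pairwise (fun B B' => Disjoint B B')) :
    Bs.card ≤ bsAt f x :=
  le_csSup (bddAbove_setOf_card_pairwise_disjoint_sensitiveBlock f x) ⟨Bs, rfl, hsens, hdisj⟩

lemma card_le_bsAt_of_sensitiveBlock_singleton {f : (Fin N → Bool) → Bool}
    {x : Fin N → Bool} {S : Finset (Fin N)} (hS : ∀ i ∈ S, SensitiveBlock f x {i}) :
    S.card ≤ bsAt f x := by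
  rw [← Finset.card_map ⟨singleton, Finset.singleton_injective⟩]
  refine card_le_bsAt ?_ ?_
  · simpa using hS
  · simp only [Finset.coe_map, Function.Embedding.coeFn_mk]
    exact Finset.singleton_injective.injOn.pairwise_image.2
      fun i _ j _ hij => Finset.disjoint_singleton.2 hij

lemma bsAt_le_blockSens (f : (Fin N → Bool) → Bool) (x : Fin N → Bool) :
    bsAt f x ≤ blockSens f :=
  le_csSup ⟨N, by rintro _ ⟨y, rfl⟩; exact bsAt_le f y⟩ ⟨x, rfl⟩

/-- Flipping the rest of a minimal sensitive block `B` returns `f` to `f x`, so after flipping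
all of `B` every single coordinate of `B` is sensitive. -/
lemma sensitiveBlock_singleton_flipSet_of_minimal {f : (Fin N → Bool) → Bool}
    {x : Fin N → Bool} {B : Finset (Fin N)} (hB : SensitiveBlock f x B)
    (hmin : ∀ B' ⊂ B, ¬ SensitiveBlock f x B') {i : Fin N} (hi : i ∈ B) :
    SensitiveBlock f (flipSet x B) {i} := by
  have hrest : f (flipSet x (B.erase i)) = f x := not_not.1 (hmin _ (Finset.erase_ssubset hi))
  rw [SensitiveBlock, flipSet_flipSet_singleton hi, hrest]
  exact hB.symm

end BlockSensitivity

/-- Every minimal sensitive block has size at most the block sensitivity. -/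
theorem stmt3 (N : ℕ) (f : (Fin N → Bool) → Bool) (X : Fin N → Bool) (B : Finset (Fin N))
    (hB : SensitiveBlock f X B) (hmin : ∀ B' ⊂ B, ¬ SensitiveBlock f X B') :
    B.card ≤ blockSens f :=
  calc B.card ≤ bsAt f (flipSet X B) := card_le_bsAt_of_sensitiveBlock_singleton
        fun _ hi => sensitiveBlock_singleton_flipSet_of_minimal hB hmin hi
    _ ≤ blockSens f := bsAt_le_blockSens f _
end

section
/- Let p be a real multilinear polynomial in variables x_1,...,x_N that nondeterministically represents a total Boolean function f, i.e., for all x ∈ {0,1}^N, p(x) = 0 if and only if f(x) = 0. Then for every input w with f(w) = 0 and every maxonomial M of p (a monomial of p of maximal degree), there exists a set B of variables appearing in M such that f(w^B) = 1. -/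
def boolToReal (b : Bool) : ℝ := if b then 1 else 0

def Multilinear {N : ℕ} (p : MvPolynomial (Fin N) ℝ) : Prop :=
  ∀ m ∈ p.support, ∀ i, m i ≤ 1

/-- `p` nondeterministically represents `f`: it vanishes exactly on the zeros of `f`. -/
def NRepresents {N : ℕ} (p : MvPolynomial (Fin N) ℝ) (f : (Fin N → Bool) → Bool) : Prop :=
  ∀ x : Fin N → Bool, MvPolynomial.eval (fun i => boolToReal (x i)) p = 0 ↔ f x = false

/-- `p` exactly represents `f` on the Boolean cube. -/
def ERepresents {N : ℕ} (p : MvPolynomial (Fin N) ℝ) (f : (Fin N → Bool) → Bool) : Prop :=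
  ∀ x : Fin N → Bool, MvPolynomial.eval (fun i => boolToReal (x i)) p = boolToReal (f x)

/-- nondeterministic degree -/
noncomputable def ndeg {N : ℕ} (f : (Fin N → Bool) → Bool) : ℕ :=
  sInf {d | ∃ p : MvPolynomial (Fin N) ℝ, Multilinear p ∧ NRepresents p f ∧ p.totalDegree = d}

open MvPolynomial Finset

theorem boolToReal_not_ne (b : Bool) : boolToReal (!b) ≠ boolToReal b := by
  cases b <;> norm_num [boolToReal]

noncomputable def flipValues {N : ℕ} (w : Fin N → Bool) (S : Finset (Fin N)) (i : Fin N) :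
    Finset ℝ :=
  if i ∈ S then {boolToReal (w i), boolToReal (!w i)} else {boolToReal (w i)}

theorem card_flipValues {N : ℕ} (w : Fin N → Bool) (S : Finset (Fin N)) (i : Fin N) :
    #(flipValues w S i) = if i ∈ S then 2 else 1 := by
  unfold flipValues
  split_ifs
  · exact card_pair (boolToReal_not_ne (w i)).symm
  · exact card_singleton _

theorem exists_flipSet_of_mem_flipValues {N : ℕ} (w : Fin N → Bool) (S : Finset (Fin N))
    (s : Fin N → ℝ) (hs : ∀ i, s i ∈ flipValues w S i) :
    ∃ B ⊆ S, s = fun i => boolToReal (flipSet w B i) := by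
  refine ⟨S.filter fun i => s i ≠ boolToReal (w i), filter_subset _ _, funext fun i => ?_⟩
  have hsi := hs i
  unfold flipValues at hsi
  by_cases hi : i ∈ S
  · rw [if_pos hi, mem_insert, mem_singleton] at hsi
    rcases hsi with hsi | hsi <;> simp [flipSet, hi, hsi, boolToReal_not_ne]
  · rw [if_neg hi, mem_singleton] at hsi
    simp [flipSet, hi, hsi]

theorem stmt6_general (N : ℕ) (f : (Fin N → Bool) → Bool) (p : MvPolynomial (Fin N) ℝ)
    (hml : Multilinear p) (hrep : NRepresents p f)
    (w : Fin N → Bool)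
    (M : (Fin N) →₀ ℕ) (hM : M ∈ p.support)
    (hmax : (M.sum fun _ e => e) = p.totalDegree) :
    ∃ B ⊆ M.support, f (flipSet w B) = true := by
  have hM_lt_card (i : Fin N) : M i < #(flipValues w M.support i) := by
    rw [card_flipValues]
    split_ifs with hi
    · exact Nat.lt_succ_of_le (hml M hM i)
    · simpa using hi
  obtain ⟨s, hs_mem, hs_eval⟩ := combinatorial_nullstellensatz_exists_eval_nonzero p M
    (mem_support_iff.mp hM) hmax.symm (flipValues w M.support) hM_lt_card
  obtain ⟨B, hB, rfl⟩ := exists_flipSet_of_mem_flipValues w M.support s hs_mem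
  exact ⟨B, hB, by simpa using mt (hrep _).mpr hs_eval⟩

/-- Maxonomial lemma: if `p` nondeterministically represents `f`, `f w = 0`, and `M` is a
monomial of `p` of maximal degree, then flipping some subset of the variables of `M` in `w`
yields a `1`-input of `f`. -/
theorem stmt6 (N : ℕ) (f : (Fin N → Bool) → Bool) (p : MvPolynomial (Fin N) ℝ)
    (hml : Multilinear p) (hrep : NRepresents p f)
    (w : Fin N → Bool) (hw : f w = false)
    (M : (Fin N) →₀ ℕ) (hM : M ∈ p.support)
    (hmax : (M.sum fun _ e => e) = p.totalDegree) :
    ∃ B ⊆ M.support, f (flipSet w B) = true :=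
  stmt6_general N f p hml hrep w M hM hmax
end

section
/- Randomized two-sided error query complexity is at least half the block sensitivity: R_2(f) ≥ bs(f)/2 for every total Boolean function f. -/
inductive DTree (N : ℕ) : Type
  | leaf : Bool → DTree N
  | node : Fin N → DTree N → DTree N → DTree N

def DTree.eval {N : ℕ} : DTree N → (Fin N → Bool) → Bool
  | .leaf b, _ => b
  | .node i t0 t1, x => if x i then t1.eval x else t0.eval x

def DTree.depth {N : ℕ} : DTree N → ℕ
  | .leaf _ => 0
  | .node _ t0 t1 => 1 + max t0.depth t1.depth

def DTree.queries {N : ℕ} : DTree N → (Fin N → Bool) → Finset (Fin N)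
  | .leaf _, _ => ∅
  | .node i t0 t1, x => insert i (if x i then t1.queries x else t0.queries x)

noncomputable def Dcomplexity {N : ℕ} (f : (Fin N → Bool) → Bool) : ℕ :=
  sInf {d | ∃ T : DTree N, T.depth ≤ d ∧ ∀ x, T.eval x = f x}

/-- A randomized decision tree: a finitely supported probability distribution over
deterministic decision trees. -/
structure RandTree (N : ℕ) where
  m : ℕ
  w : Fin m → ℝ
  nonneg : ∀ i, 0 ≤ w i
  sum_one : ∑ i, w i = 1
  tree : Fin m → DTree N

/-- every tree in the support has depth at most `q` -/
def RandTree.depthLE {N : ℕ} (R : RandTree N) (q : ℕ) : Prop :=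
  ∀ i, R.w i ≠ 0 → (R.tree i).depth ≤ q

noncomputable def RandTree.probOutput {N : ℕ} (R : RandTree N) (x : Fin N → Bool) (b : Bool) : ℝ :=
  ∑ i, if (R.tree i).eval x = b then R.w i else 0

noncomputable def RandTree.probQueries {N : ℕ} (R : RandTree N) (x : Fin N → Bool)
    (B : Finset (Fin N)) : ℝ :=
  ∑ i, if ((R.tree i).queries x ∩ B) ≠ ∅ then R.w i else 0

/-- two-sided bounded error randomized query complexity (success probability ≥ 4/5) -/
noncomputable def R2 {N : ℕ} (f : (Fin N → Bool) → Bool) : ℕ :=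
  sInf {q | ∃ R : RandTree N, R.depthLE q ∧ ∀ x, 4/5 ≤ R.probOutput x (f x)}

/-!
Fix a randomized tree `R` of depth `q` that is correct with probability `≥ 4/5`, an input `x`
and disjoint sensitive blocks `B₁, …, B_k` at `x`. A deterministic tree that never queries `B`
on `x` answers the same on `x` and on `x^B`; since `f` differs there, `R` must query `B` on `x`
with probability `≥ 4/5 - 1/5 ≥ 1/2`. A single tree queries at most `q` variables on `x`, so it
meets at most `q` of the disjoint blocks, hence `k / 2 ≤ ∑ᵢ Pr[R queries Bᵢ] ≤ q`.
-/

namespace DTree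

variable {N : ℕ}

theorem eval_flipSet_of_disjoint (T : DTree N) (x : Fin N → Bool) (B : Finset (Fin N))
    (h : Disjoint (T.queries x) B) : T.eval (flipSet x B) = T.eval x := by
  induction T with
  | leaf b => rfl
  | node i t0 t1 ih0 ih1 =>
    simp only [queries, Finset.disjoint_insert_left] at h
    have hi : flipSet x B i = x i := if_neg h.1
    cases hx : x i <;> simp only [eval, hi, hx, Bool.false_eq_true, if_true, if_false] <;>
      simp only [hx, Bool.false_eq_true, if_true, if_false] at h
    · exact ih0 h.2
    · exact ih1 h.2

theorem card_queries_le_depth (T : DTree N) (x : Fin N → Bool) :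
    (T.queries x).card ≤ T.depth := by
  induction T with
  | leaf b => simp [queries, depth]
  | node i t0 t1 ih0 ih1 =>
    refine (Finset.card_insert_le _ _).trans ?_
    cases x i <;> simp only [depth, Bool.false_eq_true, if_true, if_false] <;> omega

def queryAll (f : (Fin N → Bool) → Bool) : List (Fin N) → (Fin N → Bool) → DTree N
  | [], x₀ => .leaf (f x₀)
  | i :: L, x₀ => .node i (queryAll f L (Function.update x₀ i false))
      (queryAll f L (Function.update x₀ i true))

theorem eval_queryAll (f : (Fin N → Bool) → Bool) (L : List (Fin N)) (x₀ x : Fin N → Bool) :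
    (queryAll f L x₀).eval x = f (fun j => if j ∈ L then x j else x₀ j) := by
  induction L generalizing x₀ with
  | nil => simp [queryAll, eval]
  | cons i L ih =>
    have hsub : (queryAll f (i :: L) x₀).eval x
        = (queryAll f L (Function.update x₀ i (x i))).eval x := by
      cases hx : x i <;> simp [queryAll, eval, hx]
    rw [hsub, ih]
    congr 1
    funext j
    by_cases hjL : j ∈ L
    · simp [hjL]
    · by_cases hji : j = i
      · subst hji; simp
      · simp [hjL, hji]

theorem depth_queryAll_le (f : (Fin N → Bool) → Bool) (L : List (Fin N)) (x₀ : Fin N → Bool) :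
    (queryAll f L x₀).depth ≤ L.length := by
  induction L generalizing x₀ with
  | nil => simp [queryAll, depth]
  | cons i L ih =>
    have h0 := ih (Function.update x₀ i false)
    have h1 := ih (Function.update x₀ i true)
    simp only [queryAll, depth, List.length_cons]
    omega

theorem exists_depth_le_eval_eq (f : (Fin N → Bool) → Bool) :
    ∃ T : DTree N, T.depth ≤ N ∧ ∀ x, T.eval x = f x :=
  ⟨queryAll f (List.finRange N) (fun _ => false),
    (depth_queryAll_le _ _ _).trans (List.length_finRange).le,
    fun x => by simp [eval_queryAll]⟩

end DTree

theorem Finset.card_filter_inter_ne_empty_le {α : Type*} [DecidableEq α] (Q : Finset α)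
    (Bs : Finset (Finset α)) (hBs : (Bs : Set (Finset α)).Pairwise Disjoint) :
    (Bs.filter (fun B => Q ∩ B ≠ ∅)).card ≤ Q.card := by
  set F := Bs.filter (fun B => Q ∩ B ≠ ∅)
  have hdisj : (F : Set (Finset α)).PairwiseDisjoint (Q ∩ ·) := fun B hB B' hB' hne =>
    Finset.disjoint_of_subset_left Finset.inter_subset_right
      (Finset.disjoint_of_subset_right Finset.inter_subset_right
        (hBs (Finset.mem_filter.1 hB).1 (Finset.mem_filter.1 hB').1 hne))
  calc F.card = ∑ _B ∈ F, 1 := Finset.card_eq_sum_ones F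
    _ ≤ ∑ B ∈ F, (Q ∩ B).card := Finset.sum_le_sum fun B hB =>
        Finset.card_pos.2 (Finset.nonempty_iff_ne_empty.2 (Finset.mem_filter.1 hB).2)
    _ = (F.biUnion (Q ∩ ·)).card := (Finset.card_biUnion hdisj).symm
    _ ≤ Q.card := Finset.card_le_card (Finset.biUnion_subset.2 fun _ _ => Finset.inter_subset_left)

namespace RandTree

variable {N : ℕ} (R : RandTree N)

def ofDTree (T : DTree N) : RandTree N :=
  ⟨1, fun _ => 1, fun _ => zero_le_one, by simp, fun _ => T⟩

theorem probOutput_ofDTree (T : DTree N) (x : Fin N → Bool) (b : Bool) :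
    (ofDTree T).probOutput x b = if T.eval x = b then 1 else 0 := by
  exact Fin.sum_univ_one _

theorem probOutput_add_probOutput_not (x : Fin N → Bool) (b : Bool) :
    R.probOutput x b + R.probOutput x (!b) = 1 := by
  rw [probOutput, probOutput, ← Finset.sum_add_distrib, ← R.sum_one]
  refine Finset.sum_congr rfl fun i _ => ?_
  cases (R.tree i).eval x <;> cases b <;> simp

theorem probOutput_le_probQueries_add_probOutput_flipSet (x : Fin N → Bool)
    (B : Finset (Fin N)) (b : Bool) :
    R.probOutput x b ≤ R.probQueries x B + R.probOutput (flipSet x B) b := by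
  rw [probOutput, probOutput, probQueries, ← Finset.sum_add_distrib]
  refine Finset.sum_le_sum fun i _ => ?_
  by_cases hq : (R.tree i).queries x ∩ B = ∅
  · rw [(R.tree i).eval_flipSet_of_disjoint x B (Finset.disjoint_iff_inter_eq_empty.2 hq),
      if_neg (not_not_intro hq), zero_add]
  · have := R.nonneg i
    rw [if_pos hq]
    split <;> split <;> linarith

theorem half_le_probQueries_of_sensitiveBlock {f : (Fin N → Bool) → Bool}
    (hR : ∀ x, 4/5 ≤ R.probOutput x (f x)) {x : Fin N → Bool} {B : Finset (Fin N)}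
    (hB : SensitiveBlock f x B) : 1/2 ≤ R.probQueries x B := by
  have hflip : f x = !f (flipSet x B) := Bool.eq_not_iff.2 (Ne.symm hB)
  have hx := hR x
  have hsplit := R.probOutput_le_probQueries_add_probOutput_flipSet x B (f x)
  have hcompl := R.probOutput_add_probOutput_not (flipSet x B) (f (flipSet x B))
  have hxB := hR (flipSet x B)
  rw [hflip] at hx hsplit
  linarith

theorem sum_probQueries_le {q : ℕ} (hR : R.depthLE q) (x : Fin N → Bool)
    (Bs : Finset (Finset (Fin N))) (hBs : (Bs : Set (Finset (Fin N))).Pairwise Disjoint) :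
    ∑ B ∈ Bs, R.probQueries x B ≤ q := by
  have hmeet : ∀ i, R.w i ≠ 0 →
      (Bs.filter (fun B => (R.tree i).queries x ∩ B ≠ ∅)).card ≤ q := fun i hi =>
    (Finset.card_filter_inter_ne_empty_le _ Bs hBs).trans
      ((DTree.card_queries_le_depth _ x).trans (hR i hi))
  calc ∑ B ∈ Bs, R.probQueries x B
      = ∑ i, ((Bs.filter (fun B => (R.tree i).queries x ∩ B ≠ ∅)).card : ℝ) * R.w i := by
        simp only [probQueries]
        rw [Finset.sum_comm]
        refine Finset.sum_congr rfl fun i _ => ?_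
        rw [Finset.sum_ite, Finset.sum_const_zero, add_zero, Finset.sum_const, nsmul_eq_mul]
    _ ≤ ∑ i, (q : ℝ) * R.w i := Finset.sum_le_sum fun i _ => by
        by_cases hw : R.w i = 0
        · simp [hw]
        · exact mul_le_mul_of_nonneg_right (by exact_mod_cast hmeet i hw) (R.nonneg i)
    _ = q := by rw [← Finset.mul_sum, R.sum_one, mul_one]

theorem card_le_two_mul_of_pairwise_disjoint {f : (Fin N → Bool) → Bool} {q : ℕ}
    (hdepth : R.depthLE q) (hR : ∀ x, 4/5 ≤ R.probOutput x (f x)) (x : Fin N → Bool)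
    (Bs : Finset (Finset (Fin N))) (hsens : ∀ B ∈ Bs, SensitiveBlock f x B)
    (hBs : (Bs : Set (Finset (Fin N))).Pairwise Disjoint) :
    Bs.card ≤ 2 * q := by
  have : (Bs.card : ℝ) / 2 ≤ q :=
    calc (Bs.card : ℝ) / 2 = ∑ _B ∈ Bs, (1/2 : ℝ) := by
          rw [Finset.sum_const, nsmul_eq_mul]; ring
      _ ≤ ∑ B ∈ Bs, R.probQueries x B :=
          Finset.sum_le_sum fun B hB => R.half_le_probQueries_of_sensitiveBlock hR (hsens B hB)
      _ ≤ q := R.sum_probQueries_le hdepth x Bs hBs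
  exact_mod_cast (show (Bs.card : ℝ) ≤ 2 * q by linarith)

end RandTree

theorem exists_randTree_depthLE_R2 {N : ℕ} (f : (Fin N → Bool) → Bool) :
    ∃ R : RandTree N, R.depthLE (R2 f) ∧ ∀ x, 4/5 ≤ R.probOutput x (f x) := by
  obtain ⟨T, hdepth, heval⟩ := DTree.exists_depth_le_eval_eq f
  have hN : N ∈ {q | ∃ R : RandTree N, R.depthLE q ∧ ∀ x, 4/5 ≤ R.probOutput x (f x)} :=
    ⟨RandTree.ofDTree T, fun _ _ => hdepth, fun x => by
      norm_num [RandTree.probOutput_ofDTree, heval]⟩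
  exact Nat.sInf_mem ⟨N, hN⟩

theorem blockSens_le_of_card_le {N : ℕ} {f : (Fin N → Bool) → Bool} {n : ℕ}
    (h : ∀ x (Bs : Finset (Finset (Fin N))), (∀ B ∈ Bs, SensitiveBlock f x B) →
      (Bs : Set (Finset (Fin N))).Pairwise Disjoint → Bs.card ≤ n) :
    blockSens f ≤ n := by
  refine csSup_le (Set.range_nonempty _) ?_
  rintro _ ⟨x, rfl⟩
  refine csSup_le ⟨0, ∅, by simp, by simp, by simp⟩ ?_
  rintro k ⟨Bs, rfl, hsens, hBs⟩
  exact h x Bs hsens hBs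

/-- `R_2(f) ≥ bs(f)/2`, i.e. `bs(f) ≤ 2 * R_2(f)`. -/
theorem stmt13 (N : ℕ) (f : (Fin N → Bool) → Bool) :
    blockSens f ≤ 2 * R2 f := by
  obtain ⟨R, hdepth, hR⟩ := exists_randTree_depthLE_R2 f
  exact blockSens_le_of_card_le fun x Bs hsens hBs =>
    R.card_le_two_mul_of_pairwise_disjoint hdepth hR x Bs hsens hBs
end
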